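/- arXiv:1811.01209 — 6 statements merged into one kernel-verified Lean document; each statement's English description precedes it below -/
import Mathlib

section
/- With Δ(S) = "(" · δ(S[1]) ··· δ(S[n]) · ")"^{k+1} where δ(0) = "()", δ(1) = "((", and k = 2·rank₁(S, n): for every 1 ≤ i ≤ n, rank₁(S, i) = (excess(Δ(S), 2i+1) − 1)/2, equivalently excess(Δ(S), 2i+1) = 2·rank₁(S, i) + 1. -/
/-- Number of 1s among the first `i` characters of a binary string. -/
def rank1 (S : List Bool) (i : ℕ) : ℕ := (S.take i).count true

/-- δ(0) = "()", δ(1) = "((". A parenthesis is `true` iff it is '('. -/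
def δp (b : Bool) : List Bool := if b then [true, true] else [true, false]

/-- Δ(S) = "(" · δ(S[1])···δ(S[n]) · ")"^{k+1}, where k = 2·rank₁(S,n). -/
def ΔEx (S : List Bool) : List Bool :=
  true :: (S.flatMap δp ++ List.replicate (2 * S.count true + 1) false)

/-- Open minus closed parentheses among the first `j` characters. -/
def excess (T : List Bool) (j : ℕ) : ℤ :=
  ((T.take j).count true : ℤ) - ((T.take j).count false : ℤ)

/-! Every block `δp b` has length two, opens with `(`, and closes with `)` exactly when `b` is `0`;
so the first `2 * i + 1` characters of `ΔEx S` are `(` followed by the blocks of `S.take i`, and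
their excess is `1 + 2 * rank1 S i`. -/

lemma length_flatMap_δp (S : List Bool) : (S.flatMap δp).length = 2 * S.length := by
  induction S with
  | nil => rfl
  | cons b S ih => cases b <;> simp [δp, ih] <;> omega

lemma take_two_mul_flatMap_δp (S : List Bool) (i : ℕ) :
    (S.flatMap δp).take (2 * i) = (S.take i).flatMap δp := by
  induction S generalizing i with
  | nil => simp
  | cons b S ih =>
    cases i with
    | zero => simp
    | succ i =>
      rw [show 2 * (i + 1) = 2 * i + 1 + 1 by ring]
      cases b <;> simp [δp, ih]

lemma count_true_flatMap_δp (S : List Bool) :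
    (S.flatMap δp).count true = S.length + S.count true := by
  induction S with
  | nil => rfl
  | cons b S ih => cases b <;> simp [δp, ih] <;> omega

lemma count_false_flatMap_δp (S : List Bool) :
    (S.flatMap δp).count false = S.count false := by
  induction S with
  | nil => rfl
  | cons b S ih => cases b <;> simp [δp, ih]

lemma take_ΔEx {S : List Bool} {i : ℕ} (h : i ≤ S.length) :
    (ΔEx S).take (2 * i + 1) = true :: (S.take i).flatMap δp := by
  rw [ΔEx, List.take_succ_cons, List.take_append_of_le_length (by rw [length_flatMap_δp]; omega),
    take_two_mul_flatMap_δp]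

theorem stmt3_general (S : List Bool) (i : ℕ) (h2 : i ≤ S.length) :
    excess (ΔEx S) (2 * i + 1) = 2 * (rank1 S i : ℤ) + 1 := by
  have hlength := List.count_true_add_count_false (S.take i)
  simp only [excess, rank1, take_ΔEx h2, List.count_cons, Bool.true_beq, Bool.false_eq_true,
    if_false, count_true_flatMap_δp, count_false_flatMap_δp]
  push_cast
  omega

theorem stmt3 (S : List Bool) (i : ℕ) (h1 : 1 ≤ i) (h2 : i ≤ S.length) :
    excess (ΔEx S) (2 * i + 1) = 2 * (rank1 S i : ℤ) + 1 :=
  stmt3_general S i h2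
end

section
/- With Δ(S) = "("^n · δ(S[1]) ··· δ(S[n]) where δ(0) = ")" and δ(1) = "())": for every 1 ≤ i ≤ n, rank₁(S, i) = (findclose(Δ(S), n − i + 1) − n − i)/2, equivalently findclose(Δ(S), n − i + 1) = n + 2·rank₁(S, i) + i. -/
/-- A parenthesis is `true` iff it is an open parenthesis '('. -/
def BalancedParen (T : List Bool) : Prop :=
  (∀ p, (T.take p).count false ≤ (T.take p).count true) ∧ T.count true = T.count false

/-- δ(0) = ")", δ(1) = "())". -/
def δc (b : Bool) : List Bool := if b then [true, false, false] else [false]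

/-- Δ(S) = "("^n · δ(S[1])···δ(S[n]). -/
def ΔFc (S : List Bool) : List Bool :=
  List.replicate S.length true ++ S.flatMap δc

/-- The smallest position `q > p` such that the (1-based) segment `T[p..q]` is balanced:
the closed parenthesis matching the open parenthesis at position `p`. -/
noncomputable def findclose (T : List Bool) (p : ℕ) : ℕ :=
  sInf {q : ℕ | p < q ∧ BalancedParen ((T.drop (p - 1)).take (q - p + 1))}

lemma δcf : δc false = [false] := rfl
lemma δct : δc true = [true, false, false] := rfl
lemma crt (n : ℕ) : (List.replicate n true).count true = n := by simp
lemma crf (n : ℕ) : (List.replicate n true).count false = 0 := by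
  rw [List.count_replicate]; rfl

lemma lenF (L : List Bool) : (L.flatMap δc).length = L.length + 2 * L.count true := by
  induction L with
  | nil => simp
  | cons b L ih =>
    rw [List.flatMap_cons, List.length_append, ih]
    cases b <;> simp [δcf, δct, List.count_cons] <;> omega

lemma fullF (L : List Bool) : (L.flatMap δc).count false = L.length + (L.flatMap δc).count true := by
  induction L with
  | nil => simp
  | cons b L ih =>
    rw [List.flatMap_cons, List.count_append, List.count_append, ih]
    cases b <;> simp [δcf, δct] <;> omega

lemma strictF (L : List Bool) : ∀ m, m < (L.flatMap δc).length →
    ((L.flatMap δc).take m).count false < L.length + ((L.flatMap δc).take m).count true := by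
  induction L with
  | nil => simp
  | cons b L ih =>
    intro m hm
    rw [List.flatMap_cons] at hm ⊢
    rw [List.take_append, List.count_append, List.count_append]
    rw [List.length_append] at hm
    cases b with
    | false =>
      rw [δcf] at hm ⊢
      simp only [List.length_cons, List.length_nil, Nat.zero_add] at hm ⊢
      rcases le_or_gt 1 m with h | h
      · rw [List.take_of_length_le (by simpa using h)]
        have := ih (m - 1) (by omega)
        have c1 : List.count false [false] = 1 := rfl
        have c2 : List.count true [false] = 0 := rfl
        rw [c1, c2]
        omega
      · interval_cases m
        simp
    | true =>
      rw [δct] at hm ⊢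
      simp only [List.length_cons, List.length_nil, Nat.zero_add] at hm ⊢
      rcases le_or_gt 3 m with h | h
      · rw [List.take_of_length_le (by simpa using h)]
        have := ih (m - (1 + 1 + 1)) (by omega)
        have c1 : List.count false [true, false, false] = 2 := rfl
        have c2 : List.count true [true, false, false] = 1 := rfl
        rw [c1, c2]
        omega
      · interval_cases m <;> simp

lemma weakF (L : List Bool) (m : ℕ) :
    ((L.flatMap δc).take m).count false ≤ L.length + ((L.flatMap δc).take m).count true := by
  rcases lt_or_ge m (L.flatMap δc).length with h | h
  · exact (strictF L m h).le
  · rw [List.take_of_length_le h]; exact (fullF L).le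

theorem stmt5 (S : List Bool) (i : ℕ) (h1 : 1 ≤ i) (h2 : i ≤ S.length) :
    findclose (ΔFc S) (S.length - i + 1) = S.length + 2 * rank1 S i + i := by
  set n := S.length with hn
  set r := rank1 S i with hr
  set Q := n + 2 * r + i with hQdef
  have hdrop : (ΔFc S).drop (n - i + 1 - 1) = List.replicate i true ++ S.flatMap δc := by
    rw [ΔFc, Nat.add_sub_cancel, List.drop_append, List.drop_replicate,
      List.length_replicate]
    have h3 : n - i - n = 0 := by omega
    rw [h3, List.drop_zero]
    congr 2
    omega
  have hsplit : S.flatMap δc = (S.take i).flatMap δc ++ (S.drop i).flatMap δc := by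
    rw [← List.flatMap_append, List.take_append_drop]
  have hlenti : (S.take i).length = i := by rw [List.length_take]; omega
  have hlen1 : ((S.take i).flatMap δc).length = i + 2 * r := by
    rw [lenF, hlenti, hr, rank1]
  have hQmem : (n - i + 1) < Q ∧
      BalancedParen (((ΔFc S).drop (n - i + 1 - 1)).take (Q - (n - i + 1) + 1)) := by
    constructor
    · omega
    · rw [hdrop]
      have hk : Q - (n - i + 1) + 1 = i + (i + 2 * r) := by omega
      rw [hk, List.take_append, List.take_replicate, List.length_replicate]
      have h3 : i + (i + 2 * r) - i = i + 2 * r := by omega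
      rw [h3, min_eq_right (by omega), hsplit, List.take_append_of_le_length (by omega),
        List.take_of_length_le (by omega)]
      constructor
      · intro p
        rw [List.take_append, List.take_replicate, List.length_replicate,
          List.count_append, List.count_append, crt, crf]
        have := weakF (S.take i) (p - i)
        rw [hlenti] at this
        rcases le_or_gt p i with h | h
        · have h0 : p - i = 0 := by omega
          simp [h0]
        · omega
      · rw [List.count_append, List.count_append, crt, crf]
        have := fullF (S.take i)
        rw [hlenti] at this
        omega
  refine le_antisymm (Nat.sInf_le hQmem) (le_csInf ⟨Q, hQmem⟩ ?_)
  rintro q ⟨hq1, hq2⟩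
  by_contra hlt
  push_neg at hlt
  rw [hdrop] at hq2
  set k := q - (n - i + 1) + 1 with hk
  have hk2 : 2 ≤ k := by omega
  have hkQ : k < i + (i + 2 * r) := by omega
  rw [List.take_append, List.take_replicate, List.length_replicate] at hq2
  obtain ⟨-, heq⟩ := hq2
  rw [List.count_append, List.count_append, crt, crf] at heq
  rcases le_or_gt k i with h | h
  · have h0 : k - i = 0 := by omega
    rw [h0, min_eq_left h] at heq
    simp at heq
  · have htake : (S.flatMap δc).take (k - i) = ((S.take i).flatMap δc).take (k - i) := by
      rw [hsplit, List.take_append_of_le_length (by omega)]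
    rw [min_eq_right h.le, htake] at heq
    have := strictF (S.take i) (k - i) (by omega)
    rw [hlenti] at this
    omega
end

section
/- A string attractor of a string S of length n is a set Γ ⊆ {1,…,n} such that every nonempty substring S[i..j] has an occurrence S[i'..j'] = S[i..j] with some position of Γ in the interval [i', j']. Theorem: if Γ is a string attractor for S over alphabet Σ, and for a symbol c ∈ Σ one defines the binary string S_c by S_c[i] = 1 iff S[i] = c, then Γ is a string attractor for S_c. -/
/-- `Γ` is a string attractor of `S`: `Γ ⊆ {1,…,|S|}` (1-based positions) and every
nonempty substring of `S` (given by its 0-based start `a` and length `ℓ ≥ 1`) has an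
occurrence starting at some 0-based position `a'` that contains a position of `Γ`
(1-based positions `a'+1 … a'+ℓ`). -/
def IsAttractor {α : Type*} (S : List α) (Γ : Set ℕ) : Prop :=
  (∀ p ∈ Γ, 1 ≤ p ∧ p ≤ S.length) ∧
  ∀ a ℓ : ℕ, 1 ≤ ℓ → a + ℓ ≤ S.length →
    ∃ a', a' + ℓ ≤ S.length ∧ (S.drop a').take ℓ = (S.drop a).take ℓ ∧
      ∃ p ∈ Γ, a' + 1 ≤ p ∧ p ≤ a' + ℓ

theorem IsAttractor.map {α β : Type*} {S : List α} {Γ : Set ℕ} (f : α → β)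
    (h : IsAttractor S Γ) : IsAttractor (S.map f) Γ := by
  obtain ⟨hΓ, hocc⟩ := h
  refine ⟨by simpa using hΓ, fun a ℓ hℓ ha => ?_⟩
  rw [List.length_map] at ha ⊢
  obtain ⟨a', ha', hsub, hcross⟩ := hocc a ℓ hℓ ha
  refine ⟨a', ha', ?_, hcross⟩
  simp only [← List.map_drop, ← List.map_take, hsub]

theorem stmt8 {α : Type*} [DecidableEq α] (S : List α) (Γ : Set ℕ) (c : α)
    (h : IsAttractor S Γ) :
    IsAttractor (S.map (fun x => decide (x = c))) Γ :=
  h.map _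
end

section
/- Let S be a binary string ending in 1, written S = 0^{x₁−1}1 0^{x₂−1}1 ··· 0^{x_m−1}1 with each x_i ≥ 1, and let S' = x₁ x₂ ··· x_m (a string over positive integers). If S has a string attractor Γ of size γ, then S' has a string attractor of size at most 2γ + 1. An explicit such attractor is Γ' = {1} ∪ {r(i), r(i)+1 : i ∈ Γ} ∩ {1,…,m}, where r(i) = rank₁(S, i) + 1 if S[i] = 0 and r(i) = rank₁(S, i) if S[i] = 1. -/
/-- The binary string S = 0^{x₁−1}1 0^{x₂−1}1 ··· 0^{x_m−1}1 encoded by the gaps `xs`. -/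
def gapString (xs : List ℕ) : List Bool :=
  xs.flatMap (fun x => List.replicate (x - 1) false ++ [true])

/-- r(i) = rank₁(S,i) + 1 if S[i] = 0, and r(i) = rank₁(S,i) if S[i] = 1. -/
def rPos (S : List Bool) (i : ℕ) : ℕ :=
  if S.getD (i - 1) false = true then rank1 S i else rank1 S i + 1

open List

lemma rPos_add_one (S : List Bool) (i : ℕ) : rPos S (i + 1) = rank1 S i + 1 := by
  unfold rPos rank1
  rw [take_add_one, count_append, Nat.add_sub_cancel, getD_eq_getElem?_getD]
  cases S[i]? with
  | none => simp
  | some b => cases b <;> simp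

lemma take_sum_le_sum (xs : List ℕ) (k : ℕ) : (xs.take k).sum ≤ xs.sum :=
  (take_sublist k xs).sum_le_sum fun _ _ => Nat.zero_le _

lemma replicate_false_append_true_cons_prefix {m n : ℕ} {l₁ l₂ : List Bool}
    (h : replicate m false ++ true :: l₁ <+: replicate n false ++ true :: l₂) :
    m = n ∧ l₁ <+: l₂ := by
  induction m generalizing n with
  | zero => cases n <;> simp_all [replicate_succ]
  | succ m ih =>
    cases n with
    | zero => simp [replicate_succ] at h
    | succ n =>
      simp only [replicate_succ, cons_append, cons_prefix_cons, true_and] at h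
      simpa using ih h

section GapString

variable {xs : List ℕ}

lemma exists_eq_take_sum_add {i : ℕ} (hi : i < xs.sum) :
    ∃ k, ∃ hk : k < xs.length, ∃ t < xs[k], i = (xs.take k).sum + t := by
  induction xs generalizing i with
  | nil => simp at hi
  | cons x xs ih =>
    by_cases hix : i < x
    · exact ⟨0, by simp, i, by simpa using hix, by simp⟩
    · obtain ⟨k, hk, t, ht, hkt⟩ := ih (i := i - x) (by simp at hi; omega)
      exact ⟨k + 1, by simpa using hk, t, by simpa using ht, by simp; omega⟩

lemma gapString_nil : gapString [] = [] := rfl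

lemma gapString_cons (x : ℕ) (xs : List ℕ) :
    gapString (x :: xs) = replicate (x - 1) false ++ true :: gapString xs := by
  simp [gapString]

lemma gapString_append (xs ys : List ℕ) : gapString (xs ++ ys) = gapString xs ++ gapString ys :=
  flatMap_append ..

lemma gapString_eq_take_append_drop (xs : List ℕ) (k : ℕ) :
    gapString xs = gapString (xs.take k) ++ gapString (xs.drop k) := by
  rw [← gapString_append, take_append_drop]

lemma length_gapString (hpos : ∀ x ∈ xs, 1 ≤ x) : (gapString xs).length = xs.sum := by
  induction xs with
  | nil => rfl
  | cons x xs ih =>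
    have hx := hpos x mem_cons_self
    simp [gapString_cons, ih fun y hy => hpos y (mem_cons_of_mem x hy)]
    omega

lemma count_true_gapString (xs : List ℕ) : (gapString xs).count true = xs.length := by
  induction xs with
  | nil => rfl
  | cons x xs ih => simp [gapString_cons, count_replicate, ih]

lemma take_gapString_take_sum (hpos : ∀ x ∈ xs, 1 ≤ x) (k : ℕ) :
    (gapString xs).take (xs.take k).sum = gapString (xs.take k) := by
  rw [gapString_eq_take_append_drop xs k]
  exact take_left' (length_gapString fun x hx => hpos x (mem_of_mem_take hx))

lemma drop_gapString_take_sum (hpos : ∀ x ∈ xs, 1 ≤ x) (k : ℕ) :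
    (gapString xs).drop (xs.take k).sum = gapString (xs.drop k) := by
  rw [gapString_eq_take_append_drop xs k]
  exact drop_left' (length_gapString fun x hx => hpos x (mem_of_mem_take hx))

lemma take_gapString_take_sum_add (hpos : ∀ x ∈ xs, 1 ≤ x) {k : ℕ} (hk : k < xs.length)
    {t : ℕ} (ht : t < xs[k]) :
    (gapString xs).take ((xs.take k).sum + t) = gapString (xs.take k) ++ replicate t false := by
  rw [gapString_eq_take_append_drop xs k,
    ← length_gapString fun x hx => hpos x (mem_of_mem_take hx), take_length_add_append,
    drop_eq_getElem_cons hk, gapString_cons, take_append_of_le_length (by simp; omega), take_replicate, min_eq_left (by omega)]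

lemma drop_gapString_take_sum_add (hpos : ∀ x ∈ xs, 1 ≤ x) {k : ℕ} (hk : k < xs.length)
    {t : ℕ} (ht : t < xs[k]) :
    (gapString xs).drop ((xs.take k).sum + t) =
      replicate (xs[k] - 1 - t) false ++ true :: gapString (xs.drop (k + 1)) := by
  rw [← drop_drop, drop_gapString_take_sum hpos, drop_eq_getElem_cons hk, gapString_cons,
    drop_append_of_le_length (by simp; omega), drop_replicate]

lemma drop_gapString_take_sum_sub_one (hpos : ∀ x ∈ xs, 1 ≤ x) {a : ℕ} (ha : 1 ≤ a)
    (hal : a ≤ xs.length) :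
    (gapString xs).drop ((xs.take a).sum - 1) = true :: gapString (xs.drop a) := by
  obtain ⟨k, rfl⟩ : ∃ k, a = k + 1 := ⟨a - 1, by omega⟩
  have hk : k < xs.length := by omega
  have hx := hpos xs[k] (getElem_mem hk)
  rw [sum_take_succ xs k hk, show (xs.take k).sum + xs[k] - 1 = (xs.take k).sum + (xs[k] - 1) by
    omega, drop_gapString_take_sum_add hpos hk (by omega), Nat.sub_self, replicate_zero, nil_append]

lemma rPos_gapString (hpos : ∀ x ∈ xs, 1 ≤ x) {k : ℕ} (hk : k < xs.length) {t : ℕ}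
    (ht : t < xs[k]) : rPos (gapString xs) ((xs.take k).sum + t + 1) = k + 1 := by
  rw [rPos_add_one, rank1, take_gapString_take_sum_add hpos hk ht, count_append,
    count_true_gapString, length_take, count_replicate]
  simp only [Bool.false_eq_true, beq_iff_eq, if_false]
  omega

lemma rPos_gapString_mem_Ioc (hpos : ∀ x ∈ xs, 1 ≤ x) {j k p : ℕ}
    (hjp : (xs.take j).sum < p) (hpk : p ≤ (xs.take k).sum) :
    rPos (gapString xs) p ∈ Set.Ioc j k := by
  obtain ⟨n, hn, t, ht, hp⟩ :=
    exists_eq_take_sum_add (xs := xs) (i := p - 1) (by have := take_sum_le_sum xs k; omega)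
  have hnext := sum_take_succ xs n hn
  rw [show p = (xs.take n).sum + t + 1 by omega, rPos_gapString hpos hn ht]
  constructor
  · by_contra! hjn
    have : (xs.take (n + 1)).sum ≤ (xs.take j).sum := monotone_sum_take xs hjn
    omega
  · by_contra! hkn
    have : (xs.take k).sum ≤ (xs.take n).sum := monotone_sum_take xs (by omega)
    omega

lemma IsPrefix.of_gapString {ys : List ℕ} (hxs : ∀ x ∈ xs, 1 ≤ x) (hys : ∀ y ∈ ys, 1 ≤ y)
    (h : gapString xs <+: gapString ys) : xs <+: ys := by
  induction xs generalizing ys with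
  | nil => exact nil_prefix
  | cons x xs ih =>
    cases ys with
    | nil => simp [gapString_cons, gapString_nil] at h
    | cons y ys =>
      rw [gapString_cons, gapString_cons] at h
      obtain ⟨hxy, htail⟩ := replicate_false_append_true_cons_prefix h
      have hx := hxs x mem_cons_self
      have hy := hys y mem_cons_self
      rw [show x = y by omega, cons_prefix_cons]
      exact ⟨rfl, ih (fun x hx => hxs x (mem_cons_of_mem _ hx))
        (fun y hy => hys y (mem_cons_of_mem _ hy)) htail⟩

lemma exists_take_sum_of_drop_gapString_eq_true_cons (hpos : ∀ x ∈ xs, 1 ≤ x) {i : ℕ}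
    {l : List Bool} (h : (gapString xs).drop i = true :: l) :
    ∃ k, (xs.take k).sum ≤ i ∧ (xs.take (k + 1)).sum = i + 1 ∧
      l = gapString (xs.drop (k + 1)) := by
  have hi : i < xs.sum := by
    rw [← length_gapString hpos]
    by_contra! hle
    simp [drop_eq_nil_of_le hle] at h
  obtain ⟨k, hk, t, ht, rfl⟩ := exists_eq_take_sum_add hi
  rw [drop_gapString_take_sum_add hpos hk ht] at h
  have hlast : xs[k] - 1 - t = 0 := by
    by_contra hne
    obtain ⟨n, hn⟩ := Nat.exists_eq_succ_of_ne_zero hne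
    simp [hn, replicate_succ] at h
  rw [hlast] at h
  refine ⟨k, by omega, ?_, (cons_eq_cons.mp h).2.symm⟩
  rw [sum_take_succ _ _ hk]
  omega

lemma exists_occurrence_of_isAttractor_gapString (hpos : ∀ x ∈ xs, 1 ≤ x) {Γ : Set ℕ}
    (hΓ : IsAttractor (gapString xs) Γ) {a ℓ : ℕ} (ha : 1 ≤ a) (hℓ : 1 ≤ ℓ)
    (hlen : a + ℓ ≤ xs.length) :
    ∃ b, b + ℓ ≤ xs.length ∧ (xs.drop b).take ℓ = (xs.drop a).take ℓ ∧
      ∃ p ∈ Γ, rPos (gapString xs) p ∈ Set.Icc b (b + ℓ) := by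
  set ts := (xs.drop a).take ℓ
  have hts_len : ts.length = ℓ := by simp [ts]; omega
  have hts_pos : ∀ x ∈ ts, 1 ≤ x := fun x hx => hpos x (mem_of_mem_drop (mem_of_mem_take hx))
  have hσa : a ≤ (xs.take a).sum := by
    have := length_le_sum_of_one_le (xs.take a) fun x hx => hpos x (mem_of_mem_take hx)
    rwa [length_take_of_le (by omega)] at this
  have hσaℓ : (xs.take (a + ℓ)).sum = (xs.take a).sum + ts.sum := by rw [take_add, sum_append]
  -- In `gapString xs`, the block string of `ts` occurs right after the `1` closing block `a`.
  have hW : ((gapString xs).drop ((xs.take a).sum - 1)).take (ts.sum + 1) =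
      true :: gapString ts := by
    rw [drop_gapString_take_sum_sub_one hpos ha (by omega), take_succ_cons,
      take_gapString_take_sum fun x hx => hpos x (mem_of_mem_drop hx)]
  obtain ⟨i, hi, heq, p, hpΓ, hip, hpi⟩ := hΓ.2 ((xs.take a).sum - 1) (ts.sum + 1) (by omega)
    (by rw [length_gapString hpos]; have := take_sum_le_sum xs (a + ℓ); omega)
  have hi' : i < (gapString xs).length := by omega
  rw [hW, drop_eq_getElem_cons hi', take_succ_cons, cons_eq_cons] at heq
  obtain ⟨hhead, htail⟩ := heq
  obtain ⟨k, hki, hk, hrest⟩ := exists_take_sum_of_drop_gapString_eq_true_cons hpos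
    (by rw [drop_eq_getElem_cons hi', hhead])
  have hpre : ts <+: xs.drop (k + 1) :=
    IsPrefix.of_gapString hts_pos (fun x hx => hpos x (mem_of_mem_drop hx))
      (by rw [← hrest, ← htail]; exact take_prefix _ _)
  have hocc : (xs.drop (k + 1)).take ℓ = ts := by
    rw [← hts_len]; exact (prefix_iff_eq_take.mp hpre).symm
  have hblen : k + 1 + ℓ ≤ xs.length := by
    have := hpre.length_le
    simp only [hts_len, length_drop] at this
    omega
  refine ⟨k + 1, hblen, hocc, p, hpΓ, ?_⟩
  have hσ : (xs.take (k + 1 + ℓ)).sum = (xs.take (k + 1)).sum + ts.sum := by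
    rw [take_add, sum_append, hocc]
  obtain ⟨hlow, hhigh⟩ :=
    rPos_gapString_mem_Ioc hpos (j := k) (k := k + 1 + ℓ) (p := p) (by omega) (by omega)
  exact ⟨hlow, hhigh⟩

end GapString

lemma card_insert_filter_biUnion_pair_le {ι α : Type*} [DecidableEq α] (a : α) (s : Finset ι)
    (f g : ι → α) (P : α → Prop) [DecidablePred P] :
    (insert a ((s.biUnion fun i => ({f i, g i} : Finset α)).filter P)).card ≤ 2 * s.card + 1 := by
  have hpair : ∀ i ∈ s, ({f i, g i} : Finset α).card ≤ 2 := fun i _ =>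
    (Finset.card_insert_le _ _).trans (by simp)
  calc (insert a ((s.biUnion fun i => ({f i, g i} : Finset α)).filter P)).card
      ≤ ((s.biUnion fun i => ({f i, g i} : Finset α)).filter P).card + 1 :=
        Finset.card_insert_le _ _
    _ ≤ (s.biUnion fun i => ({f i, g i} : Finset α)).card + 1 := by
        gcongr; exact Finset.filter_subset P _
    _ ≤ s.card * 2 + 1 := by gcongr; exact Finset.card_biUnion_le_card_mul _ _ _ hpair
    _ = 2 * s.card + 1 := by ring

theorem stmt9 (xs : List ℕ) (hxs : xs ≠ []) (hpos : ∀ x ∈ xs, 1 ≤ x)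
    (Γ : Finset ℕ) (hΓ : IsAttractor (gapString xs) (↑Γ : Set ℕ)) :
    IsAttractor xs
      (↑(insert 1 ((Γ.biUnion (fun i => ({rPos (gapString xs) i,
            rPos (gapString xs) i + 1} : Finset ℕ))).filter
          (fun p => 1 ≤ p ∧ p ≤ xs.length))) : Set ℕ) ∧
    (insert 1 ((Γ.biUnion (fun i => ({rPos (gapString xs) i,
          rPos (gapString xs) i + 1} : Finset ℕ))).filter
        (fun p => 1 ≤ p ∧ p ≤ xs.length))).card ≤ 2 * Γ.card + 1 := by
  have hm : 1 ≤ xs.length := length_pos_iff.mpr hxs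
  refine ⟨⟨fun q hq => ?_, fun a ℓ hℓ hlen => ?_⟩, card_insert_filter_biUnion_pair_le _ _ _ _ _⟩
  · simp only [Finset.coe_insert, Set.mem_insert_iff, Finset.mem_coe, Finset.mem_filter] at hq
    rcases hq with rfl | ⟨_, hq⟩
    exacts [⟨le_rfl, hm⟩, hq]
  rcases Nat.eq_zero_or_pos a with rfl | ha
  · exact ⟨0, hlen, rfl, 1, Finset.mem_insert_self _ _, le_rfl, by omega⟩
  obtain ⟨b, hb, hocc, p, hpΓ, hbp, hpb⟩ :=
    exists_occurrence_of_isAttractor_gapString hpos hΓ ha hℓ hlen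
  refine ⟨b, hb, hocc, ?_⟩
  simp only [Finset.coe_insert, Set.mem_insert_iff, Finset.mem_coe, Finset.mem_filter,
    Finset.mem_biUnion, Finset.mem_insert, Finset.mem_singleton]
  -- `r(p) = b` when `p` is the `1` closing block `b`, just before the occurrence.
  by_cases hpb' : rPos (gapString xs) p = b
  · exact ⟨_, Or.inr ⟨⟨p, hpΓ, Or.inr rfl⟩, by omega, by omega⟩, by omega, by omega⟩
  · exact ⟨_, Or.inr ⟨⟨p, hpΓ, Or.inl rfl⟩, by omega, by omega⟩, by omega, by omega⟩
end

section
/- If a binary string S of length n has an SLP of size g, then Δ(S) = "(" · δ(S[1])···δ(S[n]) · ")"^{k+1} (where δ(0) = "()", δ(1) = "((", k = 2·rank₁(S,n)) has an SLP of size O(g + log n). Concretely, an SLP for Δ(S) of size at most g + 2⌈log₂(k+1)⌉ + 4 exists. -/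
/-!
Since δ(b) = "(" b, replacing every terminal rule `X → b` of the given SLP by `X → ( b`, with
two new nonterminals deriving "(" and ")", yields nonterminals deriving the δ-images of the old
ones. The run ")"^m with m = k + 1 is built by halving, ")"^(2q) = ")"^q ")"^q and
")"^(2q+1) = ")"^(2q) ")", which costs at most two rules per halving step, so 2⌈log₂ m⌉ in
total; two more rules concatenate "(", the body and the run.
-/

/-- A straight-line program over alphabet `α`: nonterminals are `0,…,g−1`; each has a
rule which is either binary `X → Y Z` (with `Y, Z` smaller than `X`, ensuring
acyclicity) or terminal `X → a`. The size of the SLP is `g`, its number of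
nonterminals. -/
structure SLP (α : Type*) where
  g : ℕ
  rhs : Fin g → (Fin g × Fin g) ⊕ α
  acyclic : ∀ X Y Z : Fin g, rhs X = Sum.inl (Y, Z) → Y < X ∧ Z < X

/-- The string derived by a nonterminal. -/
def SLP.expand {α : Type*} (P : SLP α) (X : Fin P.g) : List α :=
  match h : P.rhs X with
  | Sum.inr a => [a]
  | Sum.inl (Y, Z) => P.expand Y ++ P.expand Z
termination_by X.val
decreasing_by
  · exact (P.acyclic X Y Z h).1
  · exact (P.acyclic X Y Z h).2

/-- The SLP generates `S` if some nonterminal (the start symbol) derives `S`. -/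
def SLP.Generates {α : Type*} (P : SLP α) (S : List α) : Prop := ∃ X, P.expand X = S

theorem Nat.clog_mul_base {b n : ℕ} (hb : 1 < b) (hn : n ≠ 0) :
    Nat.clog b (n * b) = Nat.clog b n + 1 := by
  rw [Nat.clog_of_two_le hb (by nlinarith [Nat.pos_of_ne_zero hn]), Nat.mul_comm,
    Nat.add_sub_assoc hb.le, Nat.mul_add_div (by omega), Nat.div_eq_of_lt (by omega),
    add_zero]

theorem δp_eq_cons (b : Bool) : δp b = [true, b] := by
  cases b <;> rfl

namespace SLP

variable {α : Type*}

theorem expand_of_rhs_inr {P : SLP α} {X : Fin P.g} {a : α} (h : P.rhs X = .inr a) :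
    P.expand X = [a] := by
  rw [SLP.expand]
  split <;> simp_all

theorem expand_of_rhs_inl {P : SLP α} {X Y Z : Fin P.g} (h : P.rhs X = .inl (Y, Z)) :
    P.expand X = P.expand Y ++ P.expand Z := by
  rw [SLP.expand]
  split <;> simp_all

@[reducible]
def snoc (P : SLP α) (r : (Fin P.g × Fin P.g) ⊕ α) : SLP α where
  g := P.g + 1
  rhs := Fin.lastCases (r.map (Prod.map Fin.castSucc Fin.castSucc) id)
    fun X => (P.rhs X).map (Prod.map Fin.castSucc Fin.castSucc) id
  acyclic X Y Z h := by
    induction X using Fin.lastCases with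
    | last =>
      rcases r with ⟨Y', Z'⟩ | a <;> simp only [Fin.lastCases_last, Sum.map_inl, Sum.map_inr,
        Prod.map, reduceCtorEq, Sum.inl.injEq, Prod.mk.injEq] at h
      obtain ⟨rfl, rfl⟩ := h
      exact ⟨Fin.castSucc_lt_last _, Fin.castSucc_lt_last _⟩
    | cast X =>
      rcases hX : P.rhs X with ⟨Y', Z'⟩ | a <;> simp only [Fin.lastCases_castSucc, hX,
        Sum.map_inl, Sum.map_inr, Prod.map, reduceCtorEq, Sum.inl.injEq, Prod.mk.injEq] at h
      obtain ⟨rfl, rfl⟩ := h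
      simpa using P.acyclic X Y' Z' hX

theorem expand_snoc_castSucc (P : SLP α) (r : (Fin P.g × Fin P.g) ⊕ α) (X : Fin P.g) :
    (P.snoc r).expand X.castSucc = P.expand X := by
  induction X using WellFoundedLT.induction with
  | ind X ih =>
    rcases hX : P.rhs X with ⟨Y, Z⟩ | a
    · have hYZ := P.acyclic X Y Z hX
      rw [expand_of_rhs_inl hX, expand_of_rhs_inl (P := P.snoc r) (Y := Y.castSucc)
        (Z := Z.castSucc) (by simp [hX]), ih Y hYZ.1, ih Z hYZ.2]
    · rw [expand_of_rhs_inr hX, expand_of_rhs_inr (P := P.snoc r) (a := a) (by simp [hX])]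

theorem expand_snoc_last (P : SLP α) (Y Z : Fin P.g) :
    (P.snoc (.inl (Y, Z))).expand (Fin.last P.g) = P.expand Y ++ P.expand Z := by
  rw [expand_of_rhs_inl (P := P.snoc _) (Y := Y.castSucc) (Z := Z.castSucc)
    (by simp), expand_snoc_castSucc, expand_snoc_castSucc]

theorem generates_snoc (P : SLP α) (r : (Fin P.g × Fin P.g) ⊕ α) :
    P.Generates ≤ (P.snoc r).Generates := fun _ ⟨X, hX⟩ =>
  ⟨X.castSucc, (expand_snoc_castSucc P r X).trans hX⟩

theorem exists_generates_append {P : SLP α} {u v : List α} (hu : P.Generates u)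
    (hv : P.Generates v) :
    ∃ Q : SLP α, Q.g = P.g + 1 ∧ P.Generates ≤ Q.Generates ∧ Q.Generates (u ++ v) := by
  obtain ⟨Y, rfl⟩ := hu
  obtain ⟨Z, rfl⟩ := hv
  exact ⟨P.snoc (.inl (Y, Z)), rfl, generates_snoc P _, _, expand_snoc_last P Y Z⟩

theorem exists_generates_replicate {P : SLP α} {a : α} (ha : P.Generates [a]) (m : ℕ)
    (hm : m ≠ 0) : ∃ Q : SLP α, Q.g ≤ P.g + 2 * Nat.clog 2 m ∧ P.Generates ≤ Q.Generates ∧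
      Q.Generates (List.replicate m a) := by
  induction m using Nat.strong_induction_on with
  | _ m ih =>
    obtain ⟨q, rfl | rfl⟩ := Nat.even_or_odd' m
    · have hq : q ≠ 0 := by omega
      obtain ⟨Q, hQg, hPQ, hQ⟩ := ih q (by omega) hq
      obtain ⟨Q', hQ'g, hQQ', hQ'⟩ := exists_generates_append hQ hQ
      refine ⟨Q', ?_, hPQ.trans hQQ', by rwa [two_mul, List.replicate_add]⟩
      have hclog : Nat.clog 2 (2 * q) = Nat.clog 2 q + 1 := by
        rw [mul_comm]; exact Nat.clog_mul_base one_lt_two hq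
      omega
    · rcases Nat.eq_zero_or_pos q with rfl | hq
      · exact ⟨P, by simp, le_rfl, ha⟩
      obtain ⟨Q, hQg, hPQ, hQ⟩ := ih q (by omega) hq.ne'
      obtain ⟨Q', hQ'g, hQQ', hQ'⟩ := exists_generates_append hQ hQ
      obtain ⟨Q'', hQ''g, hQ'Q'', hQ''⟩ := exists_generates_append hQ' (hQQ' _ (hPQ _ ha))
      refine ⟨Q'', ?_, hPQ.trans (hQQ'.trans hQ'Q''), ?_⟩
      · have hclog : Nat.clog 2 q + 1 ≤ Nat.clog 2 (2 * q + 1) := by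
          rw [← Nat.clog_mul_base one_lt_two hq.ne']
          exact Nat.clog_mono_right 2 (by omega)
        omega
      · rwa [List.replicate_succ', two_mul, List.replicate_add]

/-- Nonterminals `0` and `1` derive `[true]` and `[false]`; the nonterminal `X` of `P` becomes
`X + 2`, a terminal rule `X → b` turning into `X + 2 → 0 b`. -/
@[reducible]
def δImage (P : SLP Bool) : SLP Bool where
  g := P.g + 2
  rhs := Fin.cases (.inr true) <| Fin.cases (.inr false) fun X =>
    match P.rhs X with
    | .inl (Y, Z) => .inl (Y.succ.succ, Z.succ.succ)
    | .inr b => .inl (0, if b then 0 else 1)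
  acyclic X Y Z h := by
    cases X using Fin.cases with
    | zero => nomatch h
    | succ X =>
      cases X using Fin.cases with
      | zero => nomatch h
      | succ X =>
        rcases hX : P.rhs X with ⟨Y', Z'⟩ | b <;>
          simp only [Fin.cases_succ, hX, Sum.inl.injEq, Prod.mk.injEq] at h <;>
          obtain ⟨rfl, rfl⟩ := h
        · simpa using P.acyclic X Y' Z' hX
        · cases b <;> simp [Fin.lt_def]

theorem expand_δImage_zero (P : SLP Bool) : P.δImage.expand 0 = [true] :=
  expand_of_rhs_inr rfl

theorem expand_δImage_one (P : SLP Bool) : P.δImage.expand 1 = [false] :=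
  expand_of_rhs_inr rfl

theorem expand_δImage_succ_succ (P : SLP Bool) (X : Fin P.g) :
    P.δImage.expand X.succ.succ = (P.expand X).flatMap δp := by
  induction X using WellFoundedLT.induction with
  | ind X ih =>
    rcases hX : P.rhs X with ⟨Y, Z⟩ | b
    · have hYZ := P.acyclic X Y Z hX
      rw [expand_of_rhs_inl hX, List.flatMap_append, ← ih Y hYZ.1, ← ih Z hYZ.2]
      exact expand_of_rhs_inl (P := P.δImage) (by simp [hX])
    · rw [expand_of_rhs_inr hX, List.flatMap_singleton, δp_eq_cons,
        expand_of_rhs_inl (P := P.δImage) (Y := 0) (Z := if b then 0 else 1) (by simp [hX]),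
        expand_δImage_zero]
      cases b <;> simp [expand_δImage_zero, expand_δImage_one]

theorem Generates.δImage {P : SLP Bool} {S : List Bool} (hS : P.Generates S) :
    P.δImage.Generates (S.flatMap δp) :=
  let ⟨X, hX⟩ := hS
  ⟨X.succ.succ, hX ▸ expand_δImage_succ_succ P X⟩

end SLP

theorem stmt13 (S : List Bool) (g : ℕ) (h : ∃ P : SLP Bool, P.g = g ∧ P.Generates S) :
    ∃ Q : SLP Bool,
      Q.g ≤ g + 2 * Nat.clog 2 (2 * S.count true + 1) + 4 ∧
      Q.Generates (ΔEx S) := by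
  obtain ⟨P, rfl, hS⟩ := h
  have hOpen : P.δImage.Generates [true] := ⟨0, P.expand_δImage_zero⟩
  have hClose : P.δImage.Generates [false] := ⟨1, P.expand_δImage_one⟩
  obtain ⟨Q₁, hQ₁g, hPQ₁, hRun⟩ :=
    SLP.exists_generates_replicate hClose (2 * S.count true + 1) (by omega)
  obtain ⟨Q₂, hQ₂g, hQ₁Q₂, hBody⟩ := SLP.exists_generates_append (hPQ₁ _ hS.δImage) hRun
  obtain ⟨Q₃, hQ₃g, -, hΔ⟩ := SLP.exists_generates_append (hQ₁Q₂ _ (hPQ₁ _ hOpen)) hBody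
  have hδg : P.δImage.g = P.g + 2 := rfl
  exact ⟨Q₃, by omega, hΔ⟩
end

section
/- In the balanced string Δ(S) = "("^n · δ(S[1])···δ(S[n]) with δ(0) = ")", δ(1) = "())": each δ(S[i]) contains exactly one closed parenthesis that is unmatched within the suffix δ(S[1])···δ(S[n]); the i-th leading open parenthesis from the right (position n − i + 1) is matched with the last character of δ(S[i]). -/
/-- Equivalently: a balanced word followed by one ')'. -/
def ExtraClose (w : List Bool) : Prop :=
  w.count false = w.count true + 1 ∧ ∀ m < w.length, (w.take m).count false ≤ (w.take m).count true

/-- A balanced word whose first '(' is matched with its last ')'. -/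
def IsPrimitiveBalanced (W : List Bool) : Prop :=
  W ≠ [] ∧ BalancedParen W ∧ ∀ m, 0 < m → m < W.length → ¬ BalancedParen (W.take m)

theorem extraClose_δc (b : Bool) : ExtraClose (δc b) := by
  unfold ExtraClose
  cases b <;> decide

section FlatMap

variable {α : Type*} {f : α → List Bool}

theorem count_false_flatMap_of_extraClose (S : List α) (hf : ∀ a ∈ S, ExtraClose (f a)) :
    (S.flatMap f).count false = (S.flatMap f).count true + S.length := by
  induction S with
  | nil => simp
  | cons a S ih =>
    have ha := (hf a List.mem_cons_self).1
    have hS := ih fun b hb => hf b (List.mem_cons_of_mem a hb)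
    simp only [List.flatMap_cons, List.count_append, List.length_cons]
    omega

theorem count_false_take_flatMap_lt_of_extraClose (S : List α) (hf : ∀ a ∈ S, ExtraClose (f a))
    {m : ℕ} (hm : m < (S.flatMap f).length) :
    ((S.flatMap f).take m).count false < ((S.flatMap f).take m).count true + S.length := by
  induction S generalizing m with
  | nil => simp at hm
  | cons a S ih =>
    have hfS : ∀ b ∈ S, ExtraClose (f b) := fun b hb => hf b (List.mem_cons_of_mem a hb)
    rw [List.flatMap_cons, List.length_append] at hm
    rw [List.flatMap_cons, List.take_append, List.count_append, List.count_append,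
      List.length_cons]
    by_cases hma : m < (f a).length
    · have hprefix := (hf a List.mem_cons_self).2 m hma
      rw [Nat.sub_eq_zero_of_le hma.le]
      simp only [List.take_zero, List.count_nil]
      omega
    · rw [List.take_of_length_le (not_lt.1 hma)]
      have ha := (hf a List.mem_cons_self).1
      have hS := ih hfS (m := m - (f a).length) (by omega)
      omega

theorem isPrimitiveBalanced_replicate_append_flatMap (S : List α) (hS : S ≠ [])
    (hf : ∀ a ∈ S, ExtraClose (f a)) :
    IsPrimitiveBalanced (List.replicate S.length true ++ S.flatMap f) := by
  set W := List.replicate S.length true ++ S.flatMap f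
  have hcount : W.count true = W.count false := by
    have := count_false_flatMap_of_extraClose S hf
    simp only [W, List.count_append, List.count_replicate_self, List.count_replicate,
      beq_false, Bool.not_true, Bool.false_eq_true, ↓reduceIte, zero_add]
    omega
  have hlt : ∀ m, 0 < m → m < W.length → (W.take m).count false < (W.take m).count true := by
    intro m hm0 hm
    simp only [W, List.length_append, List.length_replicate] at hm
    simp only [W, List.take_append, List.take_replicate, List.length_replicate,
      List.count_append, List.count_replicate_self, List.count_replicate,
      beq_false, Bool.not_true, Bool.false_eq_true, ↓reduceIte, zero_add]
    by_cases hmk : m ≤ S.length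
    · simp [Nat.sub_eq_zero_of_le hmk, hmk, hm0]
    · have := count_false_take_flatMap_lt_of_extraClose S hf (m := m - S.length) (by omega)
      rw [min_eq_right (by omega)]
      omega
  refine ⟨List.append_ne_nil_of_left_ne_nil (by simpa using hS) _, ⟨fun p => ?_, hcount⟩,
    fun m hm0 hm hbal => ?_⟩
  · rcases Nat.eq_zero_or_pos p with rfl | hp
    · simp
    by_cases hpW : p < W.length
    · exact (hlt p hp hpW).le
    · rw [List.take_of_length_le (not_lt.1 hpW), hcount]
  · exact (hlt m hm0 hm).ne' hbal.2

end FlatMap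

theorem findclose_eq_of_drop_eq_append {T W R : List Bool} {p : ℕ} (hW : IsPrimitiveBalanced W)
    (hdrop : T.drop (p - 1) = W ++ R) : findclose T p = p + W.length - 1 := by
  obtain ⟨hne, hbal, hprim⟩ := hW
  have hlen : 2 ≤ W.length := by
    have := List.count_true_add_count_false W
    have := List.length_pos_of_ne_nil hne
    have := hbal.2
    omega
  have hmem : p + W.length - 1 ∈
      {q : ℕ | p < q ∧ BalancedParen ((T.drop (p - 1)).take (q - p + 1))} := by
    refine ⟨by omega, ?_⟩
    rwa [hdrop, show p + W.length - 1 - p + 1 = W.length by omega, List.take_left]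
  refine le_antisymm (Nat.sInf_le hmem) (le_csInf ⟨_, hmem⟩ ?_)
  rintro q ⟨hpq, hq⟩
  by_contra! hqW
  rw [hdrop, List.take_append_of_le_length (by omega)] at hq
  exact hprim (q - p + 1) (by omega) (by omega) hq

/-- Each δ(S[i]) contains exactly one closed parenthesis unmatched within the suffix
δ(S[1])···δ(S[n]) (it has one more ')' than '('); and the i-th leading open parenthesis
from the right (position n − i + 1) is matched with the last character of δ(S[i]),
whose position in Δ(S) is n + |δ(S[1])···δ(S[i])|. -/
theorem stmt17 (S : List Bool) :
    (∀ b : Bool, (δc b).count false = (δc b).count true + 1) ∧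
    (∀ i : ℕ, 1 ≤ i → i ≤ S.length →
      findclose (ΔFc S) (S.length - i + 1) =
        S.length + ((S.take i).flatMap δc).length) := by
  refine ⟨fun b => (extraClose_δc b).1, fun i hi hiS => ?_⟩
  have hlen : (S.take i).length = i := List.length_take_of_le hiS
  have hdrop : (ΔFc S).drop (S.length - i + 1 - 1) =
      (List.replicate (S.take i).length true ++ (S.take i).flatMap δc) ++
        (S.drop i).flatMap δc := by
    rw [show S.length - i + 1 - 1 = S.length - i by omega, ΔFc, List.drop_append,
      List.drop_replicate, List.length_replicate, show S.length - (S.length - i) = i by omega,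
      show S.length - i - S.length = 0 by omega, List.drop_zero, hlen, List.append_assoc,
      ← List.flatMap_append, List.take_append_drop]
  have hprim := isPrimitiveBalanced_replicate_append_flatMap (S.take i)
    (List.ne_nil_of_length_pos (by omega)) fun b _ => extraClose_δc b
  rw [findclose_eq_of_drop_eq_append hprim hdrop, List.length_append, List.length_replicate, hlen]
  omega
end
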